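/- For every integer j ≥ 1, the eavesdropper-leakage term does not exceed the corresponding legitimate-channel term, g_j ≤ t_j; consequently the achievable secrecy-rate (inner-bound) expression is nonnegative: I(L) ≥ 0 for every integer L ≥ 1. -/

import Mathlib

open Finset Filter Topology

/-- Binary entropy function with base-2 logarithm. `Real.logb 2 0 = 0`, so
`H2 0 = H2 1 = 0` automatically. -/
noncomputable def H2 (p : ℝ) : ℝ :=
  -(p * Real.logb 2 p) - (1 - p) * Real.logb 2 (1 - p)

/-- Partial sums `s_j = ∑_{k=1}^j c_k` of the beam-budget sequence. -/
noncomputable def s (K B : ℝ) : ℕ → ℝ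
  | 0 => 0
  | (j+1) => s K B j + min ((K - s K B j) / 2) B

/-- The beam-budget sequence: `c_0 = 0` and `c_j = min((K - s_{j-1})/2, B)` for `j ≥ 1`. -/
noncomputable def c (K B : ℝ) : ℕ → ℝ
  | 0 => 0
  | (j+1) => min ((K - s K B j) / 2) B

/-- The `j`-th term of the outer bound (Theorem 1), for `j ≥ 1`. -/
noncomputable def t (K B : ℝ) (j : ℕ) : ℝ :=
  (1 - s K B (j-1) / K) * H2 (c K B j / (K - s K B (j-1))) + s K B (j-1) / K

/-- The outer-bound (Theorem 1) expression `U(L)`. -/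
noncomputable def U (K B : ℝ) (L : ℕ) : ℝ :=
  (1 / (L : ℝ)) * ∑ j ∈ Finset.Icc 1 L, t K B j

/-- The `j`-th eavesdropper-leakage term, for `j ≥ 1` (natural subtraction makes the
middle term vanish at `j = 1` and the final sum empty for `j ≤ 3`). -/
noncomputable def g (K B : ℝ) (j : ℕ) : ℝ :=
  ((K - s K B (j-1)) / K) * H2 (c K B j / K)
  + (c K B (j-1) * (K - s K B (j-2)) / K^2) *
      H2 ((1/2) * c K B (j-1) / (K - s K B (j-2)))
  + ∑ k ∈ Finset.Icc 1 (j-3),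
      (1/K) * ((c K B (k+1))^2 / K^2) * (1/2 : ℝ)^(2*(j-k-2)-1)

/-- The gap `G(L)` between the outer and inner bounds. -/
noncomputable def G (K B : ℝ) (L : ℕ) : ℝ :=
  (1 / (L : ℝ)) * ∑ j ∈ Finset.Icc 1 L, g K B j

/-- The inner-bound (Theorem 2) expression `I(L) = U(L) - G(L)`. -/
noncomputable def Ib (K B : ℝ) (L : ℕ) : ℝ := U K B L - G K B L

/-!
Write `j = n + 1`. Since `c_{n+1} ≤ (K - s_n)/2`, both `c_{n+1}/K` and `c_{n+1}/(K - s_n)` lie in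
`[0, 1/2]`, where `H₂` is increasing, so the first summand of `g_{n+1}` is at most the entropy part of
`t_{n+1}`. Bounding `H₂ ≤ 1` and `(1/2)^e ≤ 1`, the second summand is at most `c_n/K` and the sum
at most `s_{n-1}/K`; together these give `s_n/K`, the remaining part of `t_{n+1}`. Averaging over
`j ≤ L` gives `G(L) ≤ U(L)`.
-/

lemma H2_eq_binEntropy_div (p : ℝ) : H2 p = Real.binEntropy p / Real.log 2 := by
  simp only [H2, Real.binEntropy, Real.logb, Real.log_inv]
  ring

lemma H2_le_one (p : ℝ) : H2 p ≤ 1 := by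
  rw [H2_eq_binEntropy_div, div_le_one (Real.log_pos one_lt_two)]
  exact Real.binEntropy_le_log_two

lemma H2_monotoneOn : MonotoneOn H2 (Set.Icc 0 2⁻¹) := fun x hx y hy hxy => by
  rw [H2_eq_binEntropy_div, H2_eq_binEntropy_div]
  exact div_le_div_of_nonneg_right (Real.binEntropy_strictMonoOn.monotoneOn hx hy hxy)
    (Real.log_nonneg one_le_two)

section BeamBudget

variable {K B : ℝ}

lemma s_succ (n : ℕ) : s K B (n + 1) = s K B n + c K B (n + 1) := rfl

lemma s_pred_add_c (n : ℕ) : s K B (n - 1) + c K B n = s K B n := by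
  cases n with
  | zero => simp [s, c]
  | succ m => exact (s_succ m).symm

lemma c_succ_le_half (n : ℕ) : c K B (n + 1) ≤ (K - s K B n) / 2 := min_le_left _ _

lemma s_eq_sum_range (n : ℕ) : s K B n = ∑ k ∈ range n, c K B (k + 1) := by
  induction n with
  | zero => rfl
  | succ n ih => rw [s_succ, sum_range_succ, ih]

lemma s_lt (hK : 0 < K) (n : ℕ) : s K B n < K := by
  induction n with
  | zero => exact hK
  | succ n ih => linarith [s_succ (K := K) (B := B) n, c_succ_le_half (K := K) (B := B) n]

lemma c_nonneg (hK : 0 < K) (hB : 0 ≤ B) (n : ℕ) : 0 ≤ c K B n := by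
  cases n with
  | zero => exact le_rfl
  | succ n => exact le_min (by linarith [s_lt (B := B) hK n]) hB

lemma s_nonneg (hK : 0 < K) (hB : 0 ≤ B) (n : ℕ) : 0 ≤ s K B n := by
  rw [s_eq_sum_range]
  exact sum_nonneg fun k _ => c_nonneg hK hB (k + 1)

lemma c_succ_le (hK : 0 < K) (hB : 0 ≤ B) (n : ℕ) : c K B (n + 1) ≤ K := by
  linarith [c_succ_le_half (K := K) (B := B) n, s_nonneg hK hB n]

lemma leakage_entropy_le (hK : 0 < K) (hB : 0 ≤ B) (n : ℕ) :
    (K - s K B n) / K * H2 (c K B (n + 1) / K)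
      ≤ (K - s K B n) / K * H2 (c K B (n + 1) / (K - s K B n)) := by
  have hKs := sub_pos.2 (s_lt (B := B) hK n)
  have hc := c_nonneg hK hB (n + 1)
  refine mul_le_mul_of_nonneg_left ?_ (div_nonneg hKs.le hK.le)
  refine H2_monotoneOn ⟨by positivity, ?_⟩ ⟨by positivity, ?_⟩ ?_
  · rw [div_le_iff₀ hK]
    linarith [c_succ_le_half (K := K) (B := B) n, s_nonneg hK hB n]
  · rw [div_le_iff₀ hKs]
    linarith [c_succ_le_half (K := K) (B := B) n]
  · exact div_le_div_of_nonneg_left hc hKs (by linarith [s_nonneg hK hB n])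

lemma leakage_previous_le (hK : 0 < K) (hB : 0 ≤ B) (n : ℕ) (p : ℝ) :
    c K B n * (K - s K B (n - 1)) / K ^ 2 * H2 p ≤ c K B n / K := by
  have hc := c_nonneg hK hB n
  have hKs := sub_pos.2 (s_lt (B := B) hK (n - 1))
  calc c K B n * (K - s K B (n - 1)) / K ^ 2 * H2 p
      ≤ c K B n * (K - s K B (n - 1)) / K ^ 2 * 1 :=
        mul_le_mul_of_nonneg_left (H2_le_one p) (by positivity)
    _ ≤ c K B n * K / K ^ 2 := by
        rw [mul_one]
        gcongr
        linarith [s_nonneg hK hB (n - 1)]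
    _ = c K B n / K := by field_simp

lemma leakage_tail_le (hK : 1 ≤ K) (hB : 0 ≤ B) (m : ℕ) (e : ℕ → ℕ) :
    ∑ k ∈ Icc 1 (m - 1), (1 / K) * (c K B (k + 1) ^ 2 / K ^ 2) * (1 / 2 : ℝ) ^ e k
      ≤ s K B m / K := by
  have hK0 : 0 < K := by linarith
  have hterm : ∀ k, (1 / K) * (c K B (k + 1) ^ 2 / K ^ 2) * (1 / 2 : ℝ) ^ e k
      ≤ c K B (k + 1) / K := fun k => by
    have hc := c_nonneg hK0 hB (k + 1)
    have hcK := c_succ_le hK0 hB k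
    calc (1 / K) * (c K B (k + 1) ^ 2 / K ^ 2) * (1 / 2 : ℝ) ^ e k
        ≤ (1 / K) * (c K B (k + 1) ^ 2 / K ^ 2) * 1 := by
          gcongr
          exact pow_le_one₀ (by norm_num) (by norm_num)
      _ = c K B (k + 1) / K * (c K B (k + 1) / K) * (1 / K) := by ring
      _ ≤ c K B (k + 1) / K * 1 * 1 := by
          gcongr
          · exact (div_le_one hK0).2 hcK
          · exact (div_le_one hK0).2 hK
      _ = c K B (k + 1) / K := by ring
  calc _ ≤ ∑ k ∈ Icc 1 (m - 1), c K B (k + 1) / K := sum_le_sum fun k _ => hterm k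
    _ ≤ ∑ k ∈ range m, c K B (k + 1) / K := by
        refine sum_le_sum_of_subset_of_nonneg (fun k hk => ?_)
          fun k _ _ => div_nonneg (c_nonneg hK0 hB (k + 1)) hK0.le
        simp only [mem_Icc, mem_range] at hk ⊢
        omega
    _ = s K B m / K := by rw [← sum_div, s_eq_sum_range]

lemma g_succ_le_t_succ (hK : 1 ≤ K) (hB : 0 ≤ B) (n : ℕ) :
    g K B (n + 1) ≤ t K B (n + 1) := by
  have hK0 : 0 < K := by linarith
  have h₁ := leakage_entropy_le hK0 hB n
  have h₂ := leakage_previous_le hK0 hB n ((1 / 2) * c K B n / (K - s K B (n - 1)))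
  have h₃ := leakage_tail_le hK hB (n - 1) fun k => 2 * (n + 1 - k - 2) - 1
  have hs : s K B (n - 1) / K + c K B n / K = s K B n / K := by
    rw [← add_div, s_pred_add_c]
  have hfactor : 1 - s K B n / K = (K - s K B n) / K := by field_simp
  rw [g, t, Nat.add_sub_cancel, hfactor]
  exact (add_le_add (add_le_add h₁ h₂) h₃).trans_eq (by rw [← hs]; ring)

lemma Ib_nonneg (hK : 1 ≤ K) (hB : 0 ≤ B) (L : ℕ) : 0 ≤ Ib K B L := by
  rw [Ib, U, G, sub_nonneg]
  gcongr with j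
  obtain ⟨n, rfl⟩ := Nat.exists_eq_add_of_le' (mem_Icc.1 ‹j ∈ Icc 1 L›).1
  exact g_succ_le_t_succ hK hB n

end BeamBudget

theorem stmt_13 (K : ℕ) (hK : 2 ≤ K) (B : ℝ) (hB : 0 < B) :
    (∀ j : ℕ, 1 ≤ j → g K B j ≤ t K B j) ∧
    (∀ L : ℕ, 1 ≤ L → 0 ≤ Ib K B L) := by
  have hK' : (1 : ℝ) ≤ K := by exact_mod_cast one_le_two.trans hK
  refine ⟨fun j hj => ?_, fun L _ => Ib_nonneg hK' hB.le L⟩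
  obtain ⟨n, rfl⟩ := Nat.exists_eq_add_of_le' hj
  exact g_succ_le_t_succ hK' hB.le n
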